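/- arXiv:math/0308056 — 3 statements merged into one kernel-verified Lean document; each statement's English description precedes it below -/
import Mathlib

section
/- Let ⊙ : S₁ × S₂ → S₃ be a right tensorial coupling with right mapping functor H : S₂^op × S₃ → S₁, and assume S₃ is cocomplete. Let A be a small category. Define the tensor product over A of X ∈ S₁^(A^op) and Y ∈ S₂^A as the coequalizer X ⊗_A Y := coeq( ∐_{α : b → b' in A} X(b') ⊙ Y(b) ⇉ ∐_{a ∈ A} X(a) ⊙ Y(a) ), where on the summand indexed by α one map is induced by X(α) ⊙ Y(b) and the other by X(b') ⊙ Y(α). Then ⊗_A is a right tensorial coupling S₁^(A^op) × S₂^A → S₃: there are bijections mor_{S₃}(X ⊗_A Y, z) ≅ mor_{S₁^(A^op)}(X, H(Y(−), z)), natural in X, Y, z. -/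
open CategoryTheory CategoryTheory.Limits Opposite

/-!
A morphism `X ⊗_A Y ⟶ z` is the same as a family of morphisms `X(a) ⊙ Y(a) ⟶ z` that agree
after precomposition with `X(α) ⊙ Y(b)` and `X(b') ⊙ Y(α)` for every `α : b ⟶ b'`. Naturality
of `e` in `x` and in `y` turns that compatibility condition into exactly the naturality square of
the transposed family `X(a) ⟶ H(Y(a), z)`, and naturality of the resulting bijection in `X`, `Y`
and `z` is inherited componentwise from that of `e`.
-/

section Tensor

universe w v₁ v₂ v₃ u₁ u₂ u₃

variable {S₁ : Type u₁} {S₂ : Type u₂} {S₃ : Type u₃}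
  [Category.{v₁} S₁] [Category.{v₂} S₂] [Category.{v₃} S₃]
  {A : Type w} [SmallCategory A] [HasColimitsOfSize.{w, w} S₃]

/-- The codomain of the coequalizer diagram defining the tensor product over `A`:
the coproduct `∐_{a ∈ A} X(a) ⊙ Y(a)`. -/
noncomputable def tensorR (F : S₁ ⥤ S₂ ⥤ S₃) (X : Aᵒᵖ ⥤ S₁) (Y : A ⥤ S₂) : S₃ :=
  ∐ (fun (a : A) => (F.obj (X.obj (op a))).obj (Y.obj a))

/-- The first structural map `∐_{α : b → b'} X(b') ⊙ Y(b) ⟶ ∐_a X(a) ⊙ Y(a)`,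
induced on the summand indexed by `α : b ⟶ b'` by `X(α) ⊙ Y(b)`. -/
noncomputable def tensorLeftMap (F : S₁ ⥤ S₂ ⥤ S₃) (X : Aᵒᵖ ⥤ S₁) (Y : A ⥤ S₂) :
    (∐ (fun (p : Σ (b b' : A), b ⟶ b') => (F.obj (X.obj (op p.2.1))).obj (Y.obj p.1))) ⟶
      tensorR F X Y :=
  Sigma.desc (fun p => (F.map (X.map p.2.2.op)).app (Y.obj p.1) ≫
    Sigma.ι (fun (a : A) => (F.obj (X.obj (op a))).obj (Y.obj a)) p.1)

/-- The second structural map, induced on the summand indexed by `α : b ⟶ b'`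
by `X(b') ⊙ Y(α)`. -/
noncomputable def tensorRightMap (F : S₁ ⥤ S₂ ⥤ S₃) (X : Aᵒᵖ ⥤ S₁) (Y : A ⥤ S₂) :
    (∐ (fun (p : Σ (b b' : A), b ⟶ b') => (F.obj (X.obj (op p.2.1))).obj (Y.obj p.1))) ⟶
      tensorR F X Y :=
  Sigma.desc (fun p => (F.obj (X.obj (op p.2.1))).map (Y.map p.2.2) ≫
    Sigma.ι (fun (a : A) => (F.obj (X.obj (op a))).obj (Y.obj a)) p.2.1)

/-- The tensor product over `A` associated to the coupling `F`:
`X ⊗_A Y = coeq( ∐_{α : b → b'} X(b') ⊙ Y(b) ⇉ ∐_a X(a) ⊙ Y(a) )`. -/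
noncomputable def tensorObj (F : S₁ ⥤ S₂ ⥤ S₃) (X : Aᵒᵖ ⥤ S₁) (Y : A ⥤ S₂) : S₃ :=
  coequalizer (tensorLeftMap F X Y) (tensorRightMap F X Y)

/-- The canonical projection `∐_a X(a) ⊙ Y(a) ⟶ X ⊗_A Y`. -/
noncomputable def tensorπ (F : S₁ ⥤ S₂ ⥤ S₃) (X : Aᵒᵖ ⥤ S₁) (Y : A ⥤ S₂) :
    tensorR F X Y ⟶ tensorObj F X Y :=
  coequalizer.π _ _

variable (F : S₁ ⥤ S₂ ⥤ S₃)

section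

variable (X : Aᵒᵖ ⥤ S₁) (Y : A ⥤ S₂)

noncomputable def tensorι (a : A) : (F.obj (X.obj (op a))).obj (Y.obj a) ⟶ tensorObj F X Y :=
  Sigma.ι (fun a : A => (F.obj (X.obj (op a))).obj (Y.obj a)) a ≫ tensorπ F X Y

-- `h` is typed with source `∐ …` rather than the non-reducible `tensorR F X Y`, so that these
-- lemmas also rewrite in front of a `Sigma.desc`.
theorem ι_tensorLeftMap_assoc (p : Σ (b b' : A), b ⟶ b') {W : S₃}
    (h : (∐ fun a : A => (F.obj (X.obj (op a))).obj (Y.obj a)) ⟶ W) :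
    Sigma.ι (fun p : Σ (b b' : A), b ⟶ b' => (F.obj (X.obj (op p.2.1))).obj (Y.obj p.1)) p ≫
        tensorLeftMap F X Y ≫ h =
      (F.map (X.map p.2.2.op)).app (Y.obj p.1) ≫
        Sigma.ι (fun a : A => (F.obj (X.obj (op a))).obj (Y.obj a)) p.1 ≫ h :=
  (Sigma.ι_desc_assoc _ _ _).trans (Category.assoc _ _ _)

theorem ι_tensorRightMap_assoc (p : Σ (b b' : A), b ⟶ b') {W : S₃}
    (h : (∐ fun a : A => (F.obj (X.obj (op a))).obj (Y.obj a)) ⟶ W) :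
    Sigma.ι (fun p : Σ (b b' : A), b ⟶ b' => (F.obj (X.obj (op p.2.1))).obj (Y.obj p.1)) p ≫
        tensorRightMap F X Y ≫ h =
      (F.obj (X.obj (op p.2.1))).map (Y.map p.2.2) ≫
        Sigma.ι (fun a : A => (F.obj (X.obj (op a))).obj (Y.obj a)) p.2.1 ≫ h :=
  (Sigma.ι_desc_assoc _ _ _).trans (Category.assoc _ _ _)

theorem tensorι_condition {b b' : A} (α : b ⟶ b') :
    (F.map (X.map α.op)).app (Y.obj b) ≫ tensorι F X Y b =
      (F.obj (X.obj (op b'))).map (Y.map α) ≫ tensorι F X Y b' :=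
  (ι_tensorLeftMap_assoc F X Y ⟨b, b', α⟩ _).symm.trans
    ((_ ≫= coequalizer.condition _ _).trans (ι_tensorRightMap_assoc F X Y ⟨b, b', α⟩ _))

theorem tensor_hom_ext {z : S₃} {φ φ' : tensorObj F X Y ⟶ z}
    (h : ∀ a, tensorι F X Y a ≫ φ = tensorι F X Y a ≫ φ') : φ = φ' :=
  coequalizer.hom_ext (Sigma.hom_ext _ _ fun a =>
    (Category.assoc _ _ _).symm.trans ((h a).trans (Category.assoc _ _ _)))

noncomputable def tensorDesc {z : S₃} (k : ∀ a, (F.obj (X.obj (op a))).obj (Y.obj a) ⟶ z)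
    (hk : ∀ {b b' : A} (α : b ⟶ b'),
      (F.map (X.map α.op)).app (Y.obj b) ≫ k b = (F.obj (X.obj (op b'))).map (Y.map α) ≫ k b') :
    tensorObj F X Y ⟶ z :=
  coequalizer.desc (Sigma.desc k) (Sigma.hom_ext _ _ fun ⟨_, _, α⟩ => by
    rw [ι_tensorLeftMap_assoc, ι_tensorRightMap_assoc]
    simpa only [Sigma.ι_desc] using hk α)

@[simp]
theorem tensorι_desc {z : S₃} (k : ∀ a, (F.obj (X.obj (op a))).obj (Y.obj a) ⟶ z)
    (hk : ∀ {b b' : A} (α : b ⟶ b'),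
      (F.map (X.map α.op)).app (Y.obj b) ≫ k b = (F.obj (X.obj (op b'))).map (Y.map α) ≫ k b')
    (a : A) : tensorι F X Y a ≫ tensorDesc F X Y k hk = k a :=
  (Category.assoc _ _ _).trans ((_ ≫= coequalizer.π_desc _ _).trans (Sigma.ι_desc k a))

theorem tensorι_comp_of_tensorπ_comp {X' : Aᵒᵖ ⥤ S₁} {Y' : A ⥤ S₂}
    (p : ∀ a, (F.obj (X.obj (op a))).obj (Y.obj a) ⟶ (F.obj (X'.obj (op a))).obj (Y'.obj a))
    {t : tensorObj F X Y ⟶ tensorObj F X' Y'}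
    (ht : tensorπ F X Y ≫ t = Limits.Sigma.map p ≫ tensorπ F X' Y') (a : A) :
    tensorι F X Y a ≫ t = p a ≫ tensorι F X' Y' a :=
  (Category.assoc _ _ _).trans ((_ ≫= ht).trans (Sigma.ι_map_assoc _ _ _))

end

variable (H : S₂ᵒᵖ ⥤ S₃ ⥤ S₁)
  (e : ∀ (x : S₁) (y : S₂) (z : S₃), ((F.obj x).obj y ⟶ z) ≃ (x ⟶ (H.obj (op y)).obj z))
  (e_nat_x : ∀ {x x' : S₁} {y : S₂} {z : S₃} (f : x' ⟶ x) (k : (F.obj x).obj y ⟶ z),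
    e x' y z ((F.map f).app y ≫ k) = f ≫ e x y z k)
  (e_nat_y : ∀ {x : S₁} {y y' : S₂} {z : S₃} (g : y' ⟶ y) (k : (F.obj x).obj y ⟶ z),
    e x y' z ((F.obj x).map g ≫ k) = e x y z k ≫ (H.map g.op).app z)

noncomputable def tensorHomEquiv (X : Aᵒᵖ ⥤ S₁) (Y : A ⥤ S₂) (z : S₃) :
    (tensorObj F X Y ⟶ z) ≃ (X ⟶ Y.op ⋙ H.flip.obj z) where
  toFun φ :=
    { app := fun a => e _ _ z (tensorι F X Y a.unop ≫ φ)
      naturality := fun _ _ f => by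
        dsimp
        rw [← e_nat_x, ← e_nat_y]
        congr 1
        simpa only [Category.assoc, Quiver.Hom.op_unop] using tensorι_condition F X Y f.unop =≫ φ }
  invFun ψ := tensorDesc F X Y (fun a => (e _ _ z).symm (ψ.app (op a))) fun α =>
    (e _ _ z).injective <| by
      rw [e_nat_x, e_nat_y, Equiv.apply_symm_apply, Equiv.apply_symm_apply]
      exact ψ.naturality α.op
  left_inv φ := tensor_hom_ext F X Y fun a =>
    (tensorι_desc F X Y _ _ a).trans ((e _ _ z).symm_apply_apply _)
  right_inv ψ := NatTrans.ext <| funext fun a =>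
    (congrArg _ (tensorι_desc F X Y _ _ a.unop)).trans ((e _ _ z).apply_symm_apply _)

@[simp]
theorem tensorHomEquiv_apply_app {X : Aᵒᵖ ⥤ S₁} {Y : A ⥤ S₂} {z : S₃}
    (φ : tensorObj F X Y ⟶ z) (a : Aᵒᵖ) :
    (tensorHomEquiv F H e e_nat_x e_nat_y X Y z φ).app a =
      e _ _ z (tensorι F X Y a.unop ≫ φ) :=
  rfl

theorem tensorHomEquiv_comp
    (e_nat_z : ∀ {x : S₁} {y : S₂} {z z' : S₃} (h : z ⟶ z') (k : (F.obj x).obj y ⟶ z),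
      e x y z' (k ≫ h) = e x y z k ≫ (H.obj (op y)).map h)
    {X : Aᵒᵖ ⥤ S₁} {Y : A ⥤ S₂} {z z' : S₃} (h : z ⟶ z') (φ : tensorObj F X Y ⟶ z) :
    tensorHomEquiv F H e e_nat_x e_nat_y X Y z' (φ ≫ h) =
      tensorHomEquiv F H e e_nat_x e_nat_y X Y z φ ≫ Functor.whiskerLeft Y.op (H.flip.map h) := by
  ext a
  exact (congrArg _ (Category.assoc _ _ _).symm).trans (e_nat_z h _)

theorem tensorHomEquiv_naturality_left {X X' : Aᵒᵖ ⥤ S₁} {Y : A ⥤ S₂} {z : S₃} (ξ : X ⟶ X')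
    {t : tensorObj F X Y ⟶ tensorObj F X' Y}
    (ht : tensorπ F X Y ≫ t =
      Limits.Sigma.map (fun a => (F.map (ξ.app (op a))).app (Y.obj a)) ≫ tensorπ F X' Y)
    (φ : tensorObj F X' Y ⟶ z) :
    tensorHomEquiv F H e e_nat_x e_nat_y X Y z (t ≫ φ) =
      ξ ≫ tensorHomEquiv F H e e_nat_x e_nat_y X' Y z φ := by
  ext a
  rw [NatTrans.comp_app, tensorHomEquiv_apply_app, tensorHomEquiv_apply_app, ← Category.assoc,
    tensorι_comp_of_tensorπ_comp F X Y _ ht, Category.assoc, e_nat_x]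

theorem tensorHomEquiv_naturality_right {X : Aᵒᵖ ⥤ S₁} {Y Y' : A ⥤ S₂} {z : S₃} (η : Y ⟶ Y')
    {t : tensorObj F X Y ⟶ tensorObj F X Y'}
    (ht : tensorπ F X Y ≫ t =
      Limits.Sigma.map (fun a => (F.obj (X.obj (op a))).map (η.app a)) ≫ tensorπ F X Y')
    (φ : tensorObj F X Y' ⟶ z) :
    tensorHomEquiv F H e e_nat_x e_nat_y X Y z (t ≫ φ) =
      tensorHomEquiv F H e e_nat_x e_nat_y X Y' z φ ≫
        Functor.whiskerRight (NatTrans.op η) (H.flip.obj z) := by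
  ext a
  rw [NatTrans.comp_app, tensorHomEquiv_apply_app, tensorHomEquiv_apply_app, ← Category.assoc,
    tensorι_comp_of_tensorπ_comp F X Y _ ht, Category.assoc, e_nat_y]
  rfl

end Tensor

/-- If `⊙ : S₁ × S₂ → S₃` (curried as `F`) is a right tensorial coupling with right
mapping functor `H`, and `S₃` is cocomplete, then for every small category `A` the
tensor product over `A` is again a right tensorial coupling: there are bijections
`mor_{S₃}(X ⊗_A Y, z) ≅ mor_{S₁^{Aᵒᵖ}}(X, H(Y(−), z))` natural in `X`, `Y` and `z`
(naturality in `X` and `Y` being expressed via the induced maps of coequalizers,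
characterized by their compatibility with the canonical projections). -/
theorem stmt5 {S₁ : Type u₁} {S₂ : Type u₂} {S₃ : Type u₃}
    [Category.{v₁} S₁] [Category.{v₂} S₂] [Category.{v₃} S₃]
    {A : Type w} [SmallCategory A] [HasColimitsOfSize.{w, w} S₃]
    (F : S₁ ⥤ S₂ ⥤ S₃) (H : S₂ᵒᵖ ⥤ S₃ ⥤ S₁)
    (e : ∀ (x : S₁) (y : S₂) (z : S₃), ((F.obj x).obj y ⟶ z) ≃ (x ⟶ (H.obj (op y)).obj z))
    (e_nat_x : ∀ {x x' : S₁} {y : S₂} {z : S₃} (f : x' ⟶ x) (k : (F.obj x).obj y ⟶ z),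
      e x' y z ((F.map f).app y ≫ k) = f ≫ e x y z k)
    (e_nat_y : ∀ {x : S₁} {y y' : S₂} {z : S₃} (g : y' ⟶ y) (k : (F.obj x).obj y ⟶ z),
      e x y' z ((F.obj x).map g ≫ k) = e x y z k ≫ (H.map g.op).app z)
    (e_nat_z : ∀ {x : S₁} {y : S₂} {z z' : S₃} (h : z ⟶ z') (k : (F.obj x).obj y ⟶ z),
      e x y z' (k ≫ h) = e x y z k ≫ (H.obj (op y)).map h) :
    ∃ E : ∀ (X : Aᵒᵖ ⥤ S₁) (Y : A ⥤ S₂) (z : S₃),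
        (tensorObj F X Y ⟶ z) ≃ (X ⟶ (Y.op ⋙ H.flip.obj z)),
      (∀ (X : Aᵒᵖ ⥤ S₁) (Y : A ⥤ S₂) {z z' : S₃} (h : z ⟶ z') (φ : tensorObj F X Y ⟶ z),
        E X Y z' (φ ≫ h) = E X Y z φ ≫ Functor.whiskerLeft Y.op (H.flip.map h)) ∧
      (∀ {X X' : Aᵒᵖ ⥤ S₁} (Y : A ⥤ S₂) {z : S₃} (ξ : X ⟶ X')
          (t : tensorObj F X Y ⟶ tensorObj F X' Y),
        tensorπ F X Y ≫ t =
            Limits.Sigma.map (fun a => (F.map (ξ.app (op a))).app (Y.obj a)) ≫ tensorπ F X' Y →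
          ∀ φ : tensorObj F X' Y ⟶ z, E X Y z (t ≫ φ) = ξ ≫ E X' Y z φ) ∧
      (∀ (X : Aᵒᵖ ⥤ S₁) {Y Y' : A ⥤ S₂} {z : S₃} (η : Y ⟶ Y')
          (t : tensorObj F X Y ⟶ tensorObj F X Y'),
        tensorπ F X Y ≫ t =
            Limits.Sigma.map (fun a => (F.obj (X.obj (op a))).map (η.app a)) ≫ tensorπ F X Y' →
          ∀ φ : tensorObj F X Y' ⟶ z,
            E X Y z (t ≫ φ) = E X Y' z φ ≫ Functor.whiskerRight (NatTrans.op η) (H.flip.obj z)) :=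
  ⟨tensorHomEquiv F H e e_nat_x e_nat_y,
    fun _ _ {_ _} h φ => tensorHomEquiv_comp F H e e_nat_x e_nat_y e_nat_z h φ,
    fun {_ _} _ {_} ξ _ ht φ => tensorHomEquiv_naturality_left F H e e_nat_x e_nat_y ξ ht φ,
    fun _ {_ _ _} η _ ht φ => tensorHomEquiv_naturality_right F H e e_nat_x e_nat_y η ht φ⟩
end

section
/- Let D be a subcategory of a small category C, and fix objects d of D and c of C. Let (d ↘ D ↘ c) denote the double-comma category whose objects are composable pairs (α : d → d₀ in D, β : d₀ → c in C) with d₀ in D, and whose morphisms (α, d₀, β) → (α', d₀', β') are morphisms γ : d₀ → d₀' in D with γ ∘ α = α' and β' ∘ γ = β. Let π : (d ↘ D ↘ c) → mor_C(d, c) (the discrete category on the hom-set) be the composition functor (α, d₀, β) ↦ β ∘ α, and let ι : mor_C(d, c) → (d ↘ D ↘ c) be the functor γ ↦ (id_d, d, γ). Then π ∘ ι = id, and there is a natural transformation ν : ι ∘ π ⟶ id; in fact ι is left adjoint to π. -/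
open CategoryTheory Opposite

variable {D C : Type u} [SmallCategory D] [SmallCategory C]

/-- The double-comma category `(d ↘ D ↘ c)` of composable pairs
`(α : d → d₀ in D, β : ι d₀ → c in C)`, for a subcategory `ι : D ⥤ C`. -/
abbrev DblComma (ι : D ⥤ C) (d : D) (c : C) : Type u :=
  CostructuredArrow (Under.forget d ⋙ ι) c

/-- The composition functor `π : (d ↘ D ↘ c) ⟶ mor_C(ι d, c)` (the latter viewed as a
discrete category), `(α, d₀, β) ↦ β ∘ α`. -/
def dcPi (ι : D ⥤ C) (d : D) (c : C) : DblComma ι d c ⥤ Discrete (ι.obj d ⟶ c) where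
  obj X := Discrete.mk (ι.map X.left.hom ≫ X.hom)
  map {X Y} f := Discrete.eqToHom (by
    show ι.map X.left.hom ≫ X.hom = ι.map Y.left.hom ≫ Y.hom
    rw [← CostructuredArrow.w f]
    dsimp
    simp only [← Under.w f.left, Functor.map_comp]
    exact (Category.assoc _ _ _).symm)

/-- The functor `ι : mor_C(ι d, c) ⟶ (d ↘ D ↘ c)`, `γ ↦ (id_d, d, γ)`. -/
def dcIota (ι : D ⥤ C) (d : D) (c : C) : Discrete (ι.obj d ⟶ c) ⥤ DblComma ι d c :=
  Discrete.functor (fun γ =>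
    CostructuredArrow.mk (Y := Under.mk (𝟙 d)) (show ι.obj d ⟶ c from γ))

/-!
`(id_d, d, γ)` admits at most one morphism to any `(α, d₀, β)`: its underlying map `d ⟶ d₀`
must equal `α`. Every coherence condition is therefore automatic, and the adjunction is the
evident one with identity unit and counit `α : (id_d, d, β ∘ α) ⟶ (α, d₀, β)`.
-/

section

variable (ι : D ⥤ C) (d : D) (c : C)

lemma dcIota_obj_hom_left_right {γ : Discrete (ι.obj d ⟶ c)} {X : DblComma ι d c}
    (f : (dcIota ι d c).obj γ ⟶ X) : f.left.right = X.left.hom :=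
  (Category.id_comp _).symm.trans (Under.w f.left)

lemma dcIota_obj_hom_ext {γ : Discrete (ι.obj d ⟶ c)} {X : DblComma ι d c}
    (f g : (dcIota ι d c).obj γ ⟶ X) : f = g :=
  CostructuredArrow.hom_ext _ _ <| Under.UnderMorphism.ext <|
    (dcIota_obj_hom_left_right ι d c f).trans (dcIota_obj_hom_left_right ι d c g).symm

lemma dcIota_comp_dcPi : dcIota ι d c ⋙ dcPi ι d c = 𝟭 (Discrete (ι.obj d ⟶ c)) :=
  CategoryTheory.Functor.ext (fun ⟨γ⟩ => congrArg Discrete.mk (show ι.map (𝟙 d) ≫ γ = γ by simp))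
    (fun _ _ _ => Subsingleton.elim _ _)

def dcCounit : dcPi ι d c ⋙ dcIota ι d c ⟶ 𝟭 (DblComma ι d c) where
  app X := CostructuredArrow.homMk (Under.homMk X.left.hom (Category.id_comp _)) rfl
  naturality _ _ _ := dcIota_obj_hom_ext ι d c _ _

def dcAdjunction : dcIota ι d c ⊣ dcPi ι d c :=
  Adjunction.mkOfUnitCounit
    { unit := eqToHom (dcIota_comp_dcPi ι d c).symm
      counit := dcCounit ι d c
      left_triangle := NatTrans.ext <| funext fun _ => dcIota_obj_hom_ext ι d c _ _
      right_triangle := Subsingleton.elim _ _ }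

end

theorem stmt12_general (ι : D ⥤ C) (d : D) (c : C) :
    dcIota ι d c ⋙ dcPi ι d c = 𝟭 (Discrete (ι.obj d ⟶ c)) ∧
      Nonempty ((dcPi ι d c ⋙ dcIota ι d c) ⟶ 𝟭 (DblComma ι d c)) ∧
      Nonempty (dcIota ι d c ⊣ dcPi ι d c) :=
  ⟨dcIota_comp_dcPi ι d c, ⟨dcCounit ι d c⟩, ⟨dcAdjunction ι d c⟩⟩

/-- `π ∘ ι = id`, there is a natural transformation `ι ∘ π ⟶ id`, and in fact `ι` is
left adjoint to `π`. -/
theorem stmt12 (ι : D ⥤ C) [ι.Faithful] (d : D) (c : C) :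
    dcIota ι d c ⋙ dcPi ι d c = 𝟭 (Discrete (ι.obj d ⟶ c)) ∧
      Nonempty ((dcPi ι d c ⋙ dcIota ι d c) ⟶ 𝟭 (DblComma ι d c)) ∧
      Nonempty (dcIota ι d c ⊣ dcPi ι d c) :=
  stmt12_general ι d c
end

section
/- Let C be a small category. Then the colimit, taken over c ∈ C, of the functors c ↦ N(c' ↘ C ↘ c) (the nerve of the double-comma category, functorial in c) is naturally isomorphic, as a functor of c' ∈ C^op, to N(c' ↘ C), the nerve of the under-category of objects under c'. -/
/-!
For a functor `F : D ⥤ C`, an `n`-simplex of `N(F ↓ c)` is a chain `x₀ → ⋯ → xₙ` in `D` with a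
map `F xₙ ⟶ c`. It is the postcomposition with that map of the canonical lift of the chain over
`F xₙ`, whose structure maps are `F (xᵢ ⟶ xₙ)`. So in `colim_c N(F ↓ c)` every simplex is
identified with the canonical lift of its underlying chain in `D`, and the projections
`N(F ↓ c) ⟶ N D` form a colimit cocone. For `F = Under.forget c'` we have `D = c' ↘ C`, and the
isomorphisms are natural in `c'` because `pre (Under.map f)` commutes with the projections.
-/

open CategoryTheory CategoryTheory.Limits

universe u

namespace CategoryTheory

namespace Functor

variable {J K C D : Type*} [Category J] [Category K] [Category C] [Category D]

def toCostructuredArrowOfIsTerminal (G : J ⥤ C) (F : C ⥤ D) {t : J} (ht : IsTerminal t) :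
    J ⥤ CostructuredArrow F (F.obj (G.obj t)) :=
  G.toCostructuredArrow F _ (fun j => F.map (G.map (ht.from j)))
    (fun g => by rw [← F.map_comp, ← G.map_comp, ht.comp_from])

lemma toCostructuredArrowOfIsTerminal_comp_map_hom {F : C ⥤ D} {X : D}
    (G : J ⥤ CostructuredArrow F X) {t : J} (ht : IsTerminal t) :
    (G ⋙ CostructuredArrow.proj F X).toCostructuredArrowOfIsTerminal F ht ⋙
      CostructuredArrow.map (G.obj t).hom = G := by
  refine Functor.ext (fun j => CostructuredArrow.obj_ext _ _ rfl ?_) (fun j k g => ?_)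
  · change F.map (𝟙 _) ≫ _ = F.map (G.map (ht.from j)).left ≫ (G.obj t).hom
    rw [F.map_id, Category.id_comp, CostructuredArrow.w]
  · apply CostructuredArrow.hom_ext
    simp only [comp_map, CostructuredArrow.comp_left, CostructuredArrow.eqToHom_left]
    exact ((Category.id_comp _).trans (Category.comp_id _)).symm

lemma toCostructuredArrowOfIsTerminal_comp_map {s : K} (hs : IsTerminal s) (Φ : K ⥤ J)
    (G : J ⥤ C) (F : C ⥤ D) {t : J} (ht : IsTerminal t) :
    (Φ ⋙ G).toCostructuredArrowOfIsTerminal F hs ⋙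
      CostructuredArrow.map (F.map (G.map (ht.from (Φ.obj s)))) =
      Φ ⋙ G.toCostructuredArrowOfIsTerminal F ht := by
  refine Functor.ext (fun k => CostructuredArrow.obj_ext _ _ rfl ?_) (fun k l g => ?_)
  · change F.map (𝟙 _) ≫ F.map (G.map _) = F.map (G.map (Φ.map _)) ≫ F.map (G.map _)
    rw [F.map_id, Category.id_comp, ← F.map_comp, ← G.map_comp, ht.comp_from]
  · apply CostructuredArrow.hom_ext
    simp only [comp_map, CostructuredArrow.comp_left, CostructuredArrow.eqToHom_left]
    exact ((Category.id_comp _).trans (Category.comp_id _)).symm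

end Functor

namespace CostructuredArrow

variable {C : Type*} [Category.{u} C] {D : Type u} [SmallCategory D] (F : D ⥤ C)

def nerveProjCocone : Cocone (CostructuredArrow.functor F ⋙ nerveFunctor) where
  pt := nerve D
  ι :=
    { app := fun c => nerveFunctor.map (proj F c).toCatHom
      naturality := fun _ _ _ => rfl }

variable {F}

lemma cocone_ι_app_app_comp_map (s : Cocone (CostructuredArrow.functor F ⋙ nerveFunctor))
    {c c' : C} (f : c ⟶ c') {Δ : SimplexCategoryᵒᵖ}
    (y : ComposableArrows (CostructuredArrow F c) Δ.unop.len) :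
    (s.ι.app c').app Δ (y ⋙ map f) = (s.ι.app c).app Δ y :=
  types_congr_hom (congr_app (s.w f) Δ) y

def nerveProjCoconeDesc (s : Cocone (CostructuredArrow.functor F ⋙ nerveFunctor)) :
    nerve D ⟶ s.pt where
  app Δ := ↾fun x =>
    (s.ι.app (F.obj x.right)).app Δ (x.toCostructuredArrowOfIsTerminal F (Fin.isTerminalLast _))
  naturality Δ Δ' φ := by
    ext x
    let Φ := (SimplexCategory.toCat.map φ.unop).toFunctor
    have hcocone := cocone_ι_app_app_comp_map s
      (F.map (x.map ((Fin.isTerminalLast _).from (Φ.obj (Fin.last _)))))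
      ((Φ ⋙ x).toCostructuredArrowOfIsTerminal F (Fin.isTerminalLast _))
    exact hcocone.symm.trans ((congrArg _ (Functor.toCostructuredArrowOfIsTerminal_comp_map
      (Fin.isTerminalLast _) Φ x F (Fin.isTerminalLast _))).trans
      (NatTrans.naturality_apply _ φ _))

variable (F)

def isColimitNerveProjCocone : IsColimit (nerveProjCocone F) where
  desc := nerveProjCoconeDesc
  fac s c := by
    ext Δ y
    exact (cocone_ι_app_app_comp_map s y.right.hom _).symm.trans
      (congrArg _ (Functor.toCostructuredArrowOfIsTerminal_comp_map_hom y _))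
  uniq s m hm := by
    ext Δ x
    -- `x` is the projection of its canonical lift
    exact types_congr_hom (congr_app (hm (F.obj x.right)) Δ)
      (x.toCostructuredArrowOfIsTerminal F (Fin.isTerminalLast _))

end CostructuredArrow

end CategoryTheory

/-- For a small category `C`, the colimit over `c ∈ C` of the nerves of the
double-comma categories `(c' ↘ C ↘ c)` is isomorphic, naturally in `c' ∈ Cᵒᵖ`, to the
nerve of the under-category `c' ↘ C`.  Here `(c' ↘ C ↘ c)` is realized as the
costructured arrow category of the forgetful functor `Under c' ⥤ C` over `c`,
functorially in `c`; naturality in `c'` is expressed against the maps of colimits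
characterized by their compatibility with the colimit inclusions. -/
theorem stmt14 (C : Type u) [SmallCategory C] :
    ∃ iso : ∀ c' : C,
        colimit (CostructuredArrow.functor (Under.forget c') ⋙ nerveFunctor)
          ≅ nerve (Under c'),
      ∀ {c' c'' : C} (f : c'' ⟶ c')
        (t : colimit (CostructuredArrow.functor (Under.forget c') ⋙ nerveFunctor) ⟶
              colimit (CostructuredArrow.functor (Under.forget c'') ⋙ nerveFunctor)),
        (∀ c : C,
          colimit.ι (CostructuredArrow.functor (Under.forget c') ⋙ nerveFunctor) c ≫ t =
            nerveFunctor.map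
                (X := Cat.of (CostructuredArrow (Under.forget c') c))
                (Y := Cat.of (CostructuredArrow (Under.forget c'') c))
                (Functor.toCatHom (C := CostructuredArrow (Under.forget c') c)
                  (CostructuredArrow.pre (Under.map f) (Under.forget c'') c)) ≫
              colimit.ι (CostructuredArrow.functor (Under.forget c'') ⋙ nerveFunctor) c) →
          t ≫ (iso c'').hom =
            (iso c').hom ≫ nerveFunctor.map
              (X := Cat.of (Under c')) (Y := Cat.of (Under c'')) (Under.map f).toCatHom := by
  refine ⟨fun c' => colimit.isoColimitCocone
    ⟨_, CostructuredArrow.isColimitNerveProjCocone (Under.forget c')⟩,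
    fun f t ht => colimit.hom_ext fun c => ?_⟩
  -- `pre (Under.map f)` is typed on `CostructuredArrow (Under.map f ⋙ Under.forget c'') c`, which
  -- is the source of `ι c` only up to unfolding; the remaining square commutes definitionally.
  erw [reassoc_of% (ht c), Category.assoc, colimit.isoColimitCocone_ι_hom,
    colimit.isoColimitCocone_ι_hom_assoc]
  rfl
end
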